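/- Corollary 1: Every n-player mining game (m₁,…,mₙ) (with each mᵢ ∈ (0,1/2) and ∑ mᵢ = 1) admits at least one pure Nash equilibrium strategy profile. -/

import Mathlib

/-- `f(y) := y²·(2−3y)/(1−2y)`. -/
noncomputable def f (y : ℝ) : ℝ := y^2 * (2 - 3*y) / (1 - 2*y)

/-- `g(y) := (−y³ + 2y² + y − 1)/(2y² + 4y − 3)`. -/
noncomputable def g (y : ℝ) : ℝ := (-y^3 + 2*y^2 + y - 1) / (2*y^2 + 4*y - 3)

/-- `S(Q) := ∑_{j∈Q} m_j(1−m_j)`. -/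
noncomputable def S {n : ℕ} (m : Fin n → ℝ) (Q : Finset (Fin n)) : ℝ :=
  ∑ j ∈ Q, m j * (1 - m j)

/-- Expected reward of pool `i` when the set of insightful pools is `Q`. -/
noncomputable def ER {n : ℕ} (m : Fin n → ℝ) (Q : Finset (Fin n)) (i : Fin n) : ℝ :=
  if i ∈ Q then f (m i) + 2 * m i * S m Q else m i + 2 * m i * S m Q

/-- Relative revenue (utility) of pool `i`. -/
noncomputable def RREV {n : ℕ} (m : Fin n → ℝ) (Q : Finset (Fin n)) (i : Fin n) : ℝ :=
  ER m Q i / ∑ j, ER m Q j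

/-- The profile obtained from `Q` when pool `i` unilaterally switches its strategy. -/
def switch {n : ℕ} (i : Fin n) (Q : Finset (Fin n)) : Finset (Fin n) :=
  if i ∈ Q then Q.erase i else insert i Q

/-- `Q` is a pure Nash equilibrium: no pool can strictly increase its relative
revenue by unilaterally switching its own strategy. -/
def IsNash {n : ℕ} (m : Fin n → ℝ) (Q : Finset (Fin n)) : Prop :=
  ∀ i : Fin n, RREV m (switch i Q) i ≤ RREV m Q i

open Finset

noncomputable def tv (y : ℝ) : ℝ := y * (1 - y)^2 / (1 - 2*y)

noncomputable def Tsum {n : ℕ} (m : Fin n → ℝ) (Q : Finset (Fin n)) : ℝ :=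
  ∑ j ∈ Q, tv (m j)

noncomputable def psi {n : ℕ} (m : Fin n → ℝ) (y : ℝ) (Q : Finset (Fin n)) : ℝ :=
  (4*y - 1) * (1 + Tsum m Q) - y * (1 + 2 * S m Q)

section game
variable {n : ℕ} {m : Fin n → ℝ}

lemma tv_pos' {y : ℝ} (h0 : 0 < y) (h2 : y < 1/2) : 0 < tv y := by
  unfold tv
  have h1 : (0:ℝ) < 1 - 2*y := by linarith
  have : (0:ℝ) < 1 - y := by linarith
  positivity

lemma tv_mul {y : ℝ} (h2 : y < 1/2) : tv y * (1 - 2*y) = y*(1-y)^2 := by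
  unfold tv
  have h1 : (1:ℝ) - 2*y ≠ 0 := by linarith
  rw [div_mul_cancel₀ _ h1]

lemma keyineq {a b : ℝ} (ha : 0 < a) (hab : a ≤ b) (hs : a + 2*b ≤ 1) :
    0 ≤ (b-a)*(1+tv b) + (a*(4*b-1)*(tv a - tv b) + 2*a*b*(b*(1-b) - a*(1-a))) := by
  have hb2 : b < 1/2 := by linarith
  have ha2 : a < 1/2 := by linarith
  have h2a : (0:ℝ) < 1-2*a := by linarith
  have h2b : (0:ℝ) < 1-2*b := by linarith
  have e1 := tv_mul ha2
  have e2 := tv_mul hb2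
  have hQnn : 0 ≤ 1 - b - 2*b^2 + b^3 - a - 2*a*b + 7*a*b^2 - 2*a*b^3
      - 2*a^2 + 7*a^2*b - 6*a^2*b^2 + a^3 - 2*a^3*b := by
    nlinarith [mul_nonneg (sub_nonneg.mpr hab) (sub_nonneg.mpr hs), sq_nonneg (b-a),
      sq_nonneg (1-a-2*b), mul_nonneg ha.le (sub_nonneg.mpr hab),
      mul_nonneg ha.le (sub_nonneg.mpr hs), mul_nonneg (sub_nonneg.mpr hab) h2b.le,
      mul_nonneg (mul_nonneg ha.le ha.le) (sub_nonneg.mpr hs),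
      mul_nonneg (mul_nonneg ha.le (sub_nonneg.mpr hab)) (sub_nonneg.mpr hs),
      mul_nonneg (mul_nonneg (sub_nonneg.mpr hab) (sub_nonneg.mpr hab)) (sub_nonneg.mpr hs),
      mul_nonneg (mul_nonneg (sub_nonneg.mpr hs) (sub_nonneg.mpr hs)) (sub_nonneg.mpr hab),
      mul_pos ha (mul_pos ha ha), mul_pos h2a h2b]
  have hid : ((b-a)*(1+tv b) + (a*(4*b-1)*(tv a - tv b) + 2*a*b*(b*(1-b) - a*(1-a))))
      * ((1-2*a)*(1-2*b))
      = (b-a)*(1 - b - 2*b^2 + b^3 - a - 2*a*b + 7*a*b^2 - 2*a*b^3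
      - 2*a^2 + 7*a^2*b - 6*a^2*b^2 + a^3 - 2*a^3*b) := by
    linear_combination (a*(4*b-1)*(1-2*b))*e1 + (b*(1-4*a)*(1-2*a))*e2
  nlinarith [hid, mul_nonneg (sub_nonneg.mpr hab) hQnn, mul_pos h2a h2b]

lemma f_eq {y : ℝ} (h2 : y < 1/2) : f y = y + tv y - 2*(y*(1-y)) := by
  unfold f tv
  have h1 : (1:ℝ) - 2*y ≠ 0 := by linarith
  rw [div_eq_iff h1, sub_mul, add_mul, div_mul_cancel₀ _ h1]
  ring

lemma f_pos {y : ℝ} (h0 : 0 < y) (h2 : y < 1/2) : 0 < f y := by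
  unfold f
  have h1 : (0:ℝ) < 1 - 2*y := by linarith
  have : (0:ℝ) < 2 - 3*y := by linarith
  positivity

variable (hpos : ∀ i, 0 < m i) (hhalf : ∀ i, m i < 1/2) (hsum : ∑ i, m i = 1)
include hpos hhalf

lemma S_nonneg (Q : Finset (Fin n)) : 0 ≤ S m Q :=
  Finset.sum_nonneg fun j _ => mul_nonneg (hpos j).le (by linarith [hhalf j])

lemma Tsum_nonneg (Q : Finset (Fin n)) : 0 ≤ Tsum m Q :=
  Finset.sum_nonneg fun j _ => (tv_pos' (hpos j) (hhalf j)).le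

lemma tv_le_Tsum {Q : Finset (Fin n)} {j : Fin n} (hj : j ∈ Q) : tv (m j) ≤ Tsum m Q :=
  Finset.single_le_sum (fun j _ => (tv_pos' (hpos j) (hhalf j)).le) hj

include hsum

lemma S_le_one (Q : Finset (Fin n)) : S m Q ≤ 1 := by
  calc S m Q ≤ ∑ j ∈ Q, m j :=
        Finset.sum_le_sum fun j _ => by nlinarith [hpos j, hhalf j]
    _ ≤ ∑ j, m j := Finset.sum_le_sum_of_subset_of_nonneg (Finset.subset_univ Q)
        (fun j _ _ => (hpos j).le)
    _ = 1 := hsum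

lemma sum_ER_eq (Q : Finset (Fin n)) : ∑ j, ER m Q j = 1 + Tsum m Q := by
  have h1 : ∀ i, ER m Q i
      = (if i ∈ Q then tv (m i) - 2*(m i*(1-m i)) else 0) + m i + 2 * m i * S m Q := by
    intro i
    unfold ER
    split
    · rw [f_eq (hhalf i)]; ring
    · ring
  rw [Finset.sum_congr rfl fun i _ => h1 i]
  rw [Finset.sum_add_distrib, Finset.sum_add_distrib, Finset.sum_ite_mem,
    Finset.univ_inter, Finset.sum_sub_distrib]
  have h2 : ∑ i, 2 * m i * S m Q = 2 * S m Q := by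
    rw [show (fun i => 2 * m i * S m Q) = (fun i => m i * (2 * S m Q)) from by ext i; ring,
      ← Finset.sum_mul, hsum, one_mul]
  have h4 : ∑ x ∈ Q, 2*(m x*(1-m x)) = 2 * S m Q := by unfold S; rw [Finset.mul_sum]
  rw [h2, hsum, h4]
  unfold Tsum
  ring

lemma ER_pos (Q : Finset (Fin n)) (i : Fin n) : 0 < ER m Q i := by
  have hS := S_nonneg hpos hhalf Q
  unfold ER
  split
  · nlinarith [f_pos (hpos i) (hhalf i), hpos i]
  · nlinarith [hpos i]

lemma total_pos (Q : Finset (Fin n)) : 0 < 1 + Tsum m Q := by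
  linarith [Tsum_nonneg hpos hhalf Q]

lemma delta_identity {i : Fin n} {Q : Finset (Fin n)} (hi : i ∉ Q) :
    ER m (insert i Q) i * (1 + Tsum m Q) - ER m Q i * (1 + Tsum m (insert i Q))
      = tv (m i) * psi m (m i) Q := by
  have hTi : Tsum m (insert i Q) = tv (m i) + Tsum m Q := Finset.sum_insert hi
  have hSi : S m (insert i Q) = m i * (1 - m i) + S m Q := Finset.sum_insert hi
  have hEi : ER m (insert i Q) i = f (m i) + 2 * m i * S m (insert i Q) := by
    unfold ER; rw [if_pos (Finset.mem_insert_self i Q)]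
  have hEh : ER m Q i = m i + 2 * m i * S m Q := by
    unfold ER; rw [if_neg hi]
  rw [hEi, hEh, hTi, hSi, f_eq (hhalf i)]
  unfold psi
  linear_combination (2*(1+Tsum m Q)) * (tv_mul (hhalf i))

lemma rrev_ins_le {i : Fin n} {Q : Finset (Fin n)} (hi : i ∉ Q)
    (hψ : psi m (m i) Q ≤ 0) : RREV m (insert i Q) i ≤ RREV m Q i := by
  unfold RREV
  rw [sum_ER_eq hpos hhalf hsum, sum_ER_eq hpos hhalf hsum]
  rw [div_le_div_iff₀ (total_pos hpos hhalf hsum _) (total_pos hpos hhalf hsum _)]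
  have hid := delta_identity hpos hhalf hsum hi
  nlinarith [mul_nonpos_of_nonneg_of_nonpos (tv_pos' (hpos i) (hhalf i)).le hψ]

lemma rrev_le_ins {i : Fin n} {Q : Finset (Fin n)} (hi : i ∉ Q)
    (hψ : 0 ≤ psi m (m i) Q) : RREV m Q i ≤ RREV m (insert i Q) i := by
  unfold RREV
  rw [sum_ER_eq hpos hhalf hsum, sum_ER_eq hpos hhalf hsum]
  rw [div_le_div_iff₀ (total_pos hpos hhalf hsum _) (total_pos hpos hhalf hsum _)]
  have hid := delta_identity hpos hhalf hsum hi
  nlinarith [mul_nonneg (tv_pos' (hpos i) (hhalf i)).le hψ]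

lemma psi_mono {y y' : ℝ} (Q : Finset (Fin n)) (hyy : y' ≤ y) :
    psi m y' Q ≤ psi m y Q := by
  unfold psi
  have hcoef : (0:ℝ) ≤ 3 + 4*Tsum m Q - 2*S m Q := by
    nlinarith [Tsum_nonneg hpos hhalf Q, S_le_one hpos hhalf hsum Q]
  nlinarith [mul_nonneg (sub_nonneg.mpr hyy) hcoef]

include hpos hhalf hsum in
lemma isNash_of {Q : Finset (Fin n)}
    (h1 : ∀ i ∈ Q, 0 ≤ psi m (m i) (Q.erase i))
    (h2 : ∀ i ∉ Q, psi m (m i) Q ≤ 0) : IsNash m Q := by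
  intro i
  unfold switch
  by_cases hi : i ∈ Q
  · rw [if_pos hi]
    have h := rrev_le_ins hpos hhalf hsum (Finset.notMem_erase i Q) (h1 i hi)
    rwa [Finset.insert_erase hi] at h
  · rw [if_neg hi]
    exact rrev_ins_le hpos hhalf hsum hi (h2 i hi)


end game

/-- Corollary 1: every mining game has a pure Nash equilibrium. -/
theorem exists_pure_nash (n : ℕ) (hn : 2 ≤ n) (m : Fin n → ℝ)
    (hpos : ∀ i, 0 < m i) (hhalf : ∀ i, m i < 1/2)
    (hsum : ∑ i, m i = 1) :
    ∃ Q : Finset (Fin n), IsNash m Q := by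
  classical
  set w : Equiv.Perm (Fin n) := (Fin.revPerm).trans (Tuple.sort m) with hw
  have hanti : ∀ i j : Fin n, i ≤ j → m (w j) ≤ m (w i) := by
    intro i j hij
    have : Fin.rev j ≤ Fin.rev i := Fin.rev_le_rev.mpr hij
    have h2 := Tuple.monotone_sort m this
    simpa [hw, Function.comp] using h2
  set Qs : ℕ → Finset (Fin n) := fun l => (univ.filter (fun i : Fin n => (i:ℕ) < l)).image w
    with hQs
  have hmemQs : ∀ (l : ℕ) (j : Fin n), w j ∈ Qs l ↔ (j:ℕ) < l := by
    intro l j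
    simp [hQs, Finset.mem_image, Finset.mem_filter, w.injective.eq_iff]
  set M : ℕ → ℝ := fun l => if h : l < n then m (w ⟨l, h⟩) else 0 with hM
  have hP : ∃ l, n ≤ l ∨ psi m (M l) (Qs l) ≤ 0 := ⟨n, Or.inl le_rfl⟩
  set k := Nat.find hP with hk
  have hkn : k ≤ n := Nat.find_le (Or.inl le_rfl)
  -- structure of Qs (l+1)
  have hQsucc : ∀ (l : ℕ) (hl : l < n), Qs (l+1) = insert (w ⟨l, hl⟩) (Qs l) := by
    intro l hl
    show (univ.filter (fun i : Fin n => (i:ℕ) < l+1)).image w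
        = insert (w ⟨l, hl⟩) ((univ.filter (fun i : Fin n => (i:ℕ) < l)).image w)
    have : (univ.filter (fun i : Fin n => (i:ℕ) < l+1))
        = insert (⟨l, hl⟩ : Fin n) (univ.filter (fun i : Fin n => (i:ℕ) < l)) := by
      ext x
      simp only [Finset.mem_insert, Finset.mem_filter, Finset.mem_univ, true_and]
      constructor
      · intro hx
        rcases Nat.lt_succ_iff_lt_or_eq.mp hx with h | h
        · exact Or.inr h
        · exact Or.inl (Fin.ext h)
      · rintro (rfl | hx)
        · exact Nat.lt_succ_self l
        · exact Nat.lt_succ_of_lt hx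
    rw [this, Finset.image_insert]
  -- the invariant
  have inv : ∀ l, l ≤ k → ∀ j : Fin n, (j:ℕ) < l →
      0 ≤ psi m (m (w j)) ((Qs l).erase (w j)) := by
    intro l
    induction l with
    | zero => intro _ j hj; omega
    | succ l ih =>
      intro hlk j hj
      have hlk' : l < k := hlk
      have hnP := Nat.find_min hP hlk'
      push_neg at hnP
      obtain ⟨hln', hG'⟩ := hnP
      set x := w ⟨l, hln'⟩ with hx
      have hMl : M l = m x := by rw [hM]; simp [hln']; rfl
      have hxQ : x ∉ Qs l := by
        rw [hx]
        intro hmem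
        exact absurd ((hmemQs l ⟨l, hln'⟩).mp hmem) (lt_irrefl l)
      have hIns := hQsucc l hln'
      rcases Nat.lt_succ_iff_lt_or_eq.mp hj with hj' | hjl
      · -- j < l : main case
        have hjQ : w j ∈ Qs l := (hmemQs l j).mpr hj'
        have hne : x ≠ w j := by
          rw [hx]; intro h
          have := w.injective h
          have : l = (j:ℕ) := congrArg Fin.val this
          omega
        rw [hIns, Finset.erase_insert_of_ne hne]
        set E := (Qs l).erase (w j) with hE
        have hxE : x ∉ E := fun h => hxQ (Finset.mem_of_mem_erase h)
        set a := m x with ha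
        set b := m (w j) with hb
        have hab : a ≤ b := by
          apply hanti j ⟨l, hln'⟩
          exact Fin.le_def.mpr (le_of_lt hj')
        have ha0 : 0 < a := hpos x
        have hb2 : b < 1/2 := hhalf (w j)
        have ihb : 0 ≤ psi m b E := ih (le_of_lt hlk') j hj'
        have hTsumIns : Tsum m (insert x E) = tv a + Tsum m E := Finset.sum_insert hxE
        have hSIns : S m (insert x E) = a*(1-a) + S m E := Finset.sum_insert hxE
        by_cases hc : 1 ≤ a + 2*b
        · -- additivity case
          have hadd : psi m b (insert x E)
              = psi m b E + ((4*b-1)*tv a - b*(2*(a*(1-a)))) := by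
            unfold psi; rw [hTsumIns, hSIns]; ring
          have h2a : (0:ℝ) < 1 - 2*a := by linarith [hhalf x]
          have e1 := tv_mul (hhalf x)
          have hbr : 0 ≤ (4*b-1)*tv a - b*(2*(a*(1-a))) := by
            have hkey : ((4*b-1)*tv a - b*(2*(a*(1-a)))) * (1-2*a)
                = a*(1-a)*(a+2*b-1) := by linear_combination (4*b-1) * e1
            nlinarith [mul_nonneg (mul_nonneg ha0.le (by linarith : (0:ℝ) ≤ 1-a))
              (by linarith : (0:ℝ) ≤ a+2*b-1)]
          linarith [hadd, ihb, hbr]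
        · -- key inequality case
          push_neg at hc
          have hTE : Tsum m E + tv b = Tsum m (Qs l) := Finset.sum_erase_add _ _ hjQ
          have hSE : S m E + b*(1-b) = S m (Qs l) := Finset.sum_erase_add _ _ hjQ
          have hmain : a * psi m b (insert x E)
              = b * psi m a (Qs l) + (b-a)*(1+Tsum m (Qs l))
                + (a*(4*b-1)*(tv a - tv b) + 2*a*b*(b*(1-b) - a*(1-a))) := by
            unfold psi
            rw [hTsumIns, hSIns]
            linear_combination (a*(4*b-1)) * hTE - (2*a*b) * hSE
          have hkey := keyineq ha0 hab hc.le
          have hTl_ge : tv b ≤ Tsum m (Qs l) := tv_le_Tsum hpos hhalf hjQ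
          have hGa : 0 < psi m a (Qs l) := by rwa [hMl] at hG'
          have h1 : 0 ≤ a * psi m b (insert x E) := by
            nlinarith [mul_pos (hpos (w j)) hGa,
              mul_nonneg (sub_nonneg.mpr hab) (sub_nonneg.mpr hTl_ge)]
          nlinarith [h1, ha0]
      · -- j = l
        have hjeq : j = ⟨l, hln'⟩ := Fin.ext hjl
        rw [hIns, hjeq, ← hx, Finset.erase_insert hxQ, ← hMl]
        exact hG'.le
  -- assemble
  refine ⟨Qs k, isNash_of hpos hhalf hsum ?_ ?_⟩
  · intro i hi
    obtain ⟨j, hj⟩ : ∃ j, w j = i := ⟨w.symm i, w.apply_symm_apply i⟩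
    subst hj
    have hjk : (j:ℕ) < k := (hmemQs k j).mp hi
    exact inv k le_rfl j hjk
  · intro i hi
    obtain ⟨j, hj⟩ : ∃ j, w j = i := ⟨w.symm i, w.apply_symm_apply i⟩
    subst hj
    have hjk : ¬ (j:ℕ) < k := fun h => hi ((hmemQs k j).mpr h)
    have hkn' : k < n := lt_of_le_of_lt (not_lt.mp hjk) j.isLt
    have hspec := Nat.find_spec hP
    rw [← hk] at hspec
    rcases hspec with h | h
    · omega
    · have hMk : M k = m (w ⟨k, hkn'⟩) := by rw [hM]; simp [hkn']
      have hle : m (w j) ≤ M k := by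
        rw [hMk]
        exact hanti ⟨k, hkn'⟩ j (Fin.le_def.mpr (not_lt.mp hjk))
      calc psi m (m (w j)) (Qs k) ≤ psi m (M k) (Qs k) :=
            psi_mono hpos hhalf hsum _ hle
        _ ≤ 0 := h
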